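/- arXiv:1101.2721 — 2 statements merged into one kernel-verified Lean document; each statement's English description precedes it below -/
import Mathlib

section
/- Suppose nonnegative reals r_1, r_2, C_1, C_2 satisfy r_1 + r_2 ≤ C_1 + C_2, and set c_j = max(0, r_1 + r_2 − C_{j̄}). If r_{11,p}, r_{12,p} satisfy 0 ≤ r_{11,p} ≤ c_1, 0 ≤ r_{12,p} ≤ c_2, and c_1 + c_2 − r_2 ≤ r_{11,p} + r_{12,p} ≤ r_1, and we define r_{21,p} = c_1 − r_{11,p}, r_{22,p} = c_2 − r_{12,p}, then all four private rates are nonnegative, r_{11,p} + r_{12,p} ≤ r_1, r_{21,p} + r_{22,p} ≤ r_2, and for each j the backhaul constraint r_1 + r_2 − (r_{1 j̄,p} + r_{2 j̄,p}) ≤ C_j holds. -/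
theorem polytope_parametrization_feasible_general
    (r1 r2 C1 C2 c1 c2 r11p r12p r21p r22p : ℝ)
    (hc1 : c1 = max 0 (r1 + r2 - C2)) (hc2 : c2 = max 0 (r1 + r2 - C1))
    (h11l : 0 ≤ r11p) (h11u : r11p ≤ c1)
    (h12l : 0 ≤ r12p) (h12u : r12p ≤ c2)
    (hL : c1 + c2 - r2 ≤ r11p + r12p) (hU : r11p + r12p ≤ r1)
    (h21 : r21p = c1 - r11p) (h22 : r22p = c2 - r12p) :
    (0 ≤ r11p ∧ 0 ≤ r12p ∧ 0 ≤ r21p ∧ 0 ≤ r22p) ∧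
    r11p + r12p ≤ r1 ∧ r21p + r22p ≤ r2 ∧
    r1 + r2 - (r12p + r22p) ≤ C1 ∧ r1 + r2 - (r11p + r21p) ≤ C2 := by
  subst h21 h22
  -- The private rates at base station j add up to exactly c_j, so backhaul j̄ carries
  -- r1 + r2 - c_j, which is at most C_j̄ because c_j dominates r1 + r2 - C_j̄.
  have hc1_ge : r1 + r2 - C2 ≤ c1 := hc1 ▸ le_max_right _ _
  have hc2_ge : r1 + r2 - C1 ≤ c2 := hc2 ▸ le_max_right _ _
  refine ⟨⟨h11l, h12l, sub_nonneg.mpr h11u, sub_nonneg.mpr h12u⟩, hU, ?_, ?_, ?_⟩ <;> linarith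

/-- Feasibility of the polytope parametrization: choosing `(r_{11,p}, r_{12,p})` in the
polytope and setting `r_{21,p} = c_1 − r_{11,p}`, `r_{22,p} = c_2 − r_{12,p}` yields
nonnegative private rates satisfying the per-user and backhaul constraints. -/
theorem polytope_parametrization_feasible
    (r1 r2 C1 C2 c1 c2 r11p r12p r21p r22p : ℝ)
    (hr1 : 0 ≤ r1) (hr2 : 0 ≤ r2) (hC1 : 0 ≤ C1) (hC2 : 0 ≤ C2)
    (hsum : r1 + r2 ≤ C1 + C2)
    (hc1 : c1 = max 0 (r1 + r2 - C2)) (hc2 : c2 = max 0 (r1 + r2 - C1))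
    (h11l : 0 ≤ r11p) (h11u : r11p ≤ c1)
    (h12l : 0 ≤ r12p) (h12u : r12p ≤ c2)
    (hL : c1 + c2 - r2 ≤ r11p + r12p) (hU : r11p + r12p ≤ r1)
    (h21 : r21p = c1 - r11p) (h22 : r22p = c2 - r12p) :
    (0 ≤ r11p ∧ 0 ≤ r12p ∧ 0 ≤ r21p ∧ 0 ≤ r22p) ∧
    r11p + r12p ≤ r1 ∧ r21p + r22p ≤ r2 ∧
    r1 + r2 - (r12p + r22p) ≤ C1 ∧ r1 + r2 - (r11p + r21p) ≤ C2 :=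
  polytope_parametrization_feasible_general r1 r2 C1 C2 c1 c2 r11p r12p r21p r22p hc1 hc2 h11l h11u
    h12l h12u hL hU h21 h22
end

section
/- Let h ∈ ℂ^{1×n} be a nonzero row vector, R = h^H h, and suppose V ⪰ 0 satisfies Γ(σ² + I₀) = Tr[R V] for some Γ, σ², I₀ > 0. Then there exists a rank-one V' = w w^H with Tr[R V'] = Tr[R V] and Tr V' ≤ Tr V; specifically w can be chosen proportional to the component of an appropriate vector, so the SDP relaxation of the single-rank-one-channel beamforming constraint admits a rank-one optimal solution. -/
open Matrix ComplexOrder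

/-! With `u = hᴴ` and `q = uᴴVu ≥ 0`, take `w = Vu / √q` (which is `0` when `q = 0`). Then
`|uᴴw|² = q²/q = q`, and `‖w‖² = ‖Vu‖²/q ≤ Tr V` because Cauchy–Schwarz for the semi-inner
product `xᴴVy` gives `|(Vu)ᵢ|² ≤ Vᵢᵢ q` for every `i`. -/

namespace Matrix

variable {𝕜 n : Type*} [RCLike 𝕜] [Fintype n]

theorem trace_vecMulVec_mul {α : Type*} [CommSemiring α] (a b : n → α) (M : Matrix n n α) :
    (vecMulVec a b * M).trace = b ⬝ᵥ (M *ᵥ a) := by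
  rw [trace_mul_comm, mul_vecMulVec, trace_vecMulVec, dotProduct_comm]

theorem re_trace_vecMulVec_star (w : n → 𝕜) :
    RCLike.re (vecMulVec w (star w)).trace = ∑ i, ‖w i‖ ^ 2 := by
  simp [dotProduct, RCLike.mul_conj]

theorem dotProduct_vecMulVec_star_mulVec (u w : n → 𝕜) :
    star u ⬝ᵥ (vecMulVec w (star w) *ᵥ u) = (‖star u ⬝ᵥ w‖ ^ 2 : ℝ) := by
  rw [vecMulVec_mulVec, op_smul_eq_smul, dotProduct_smul, smul_eq_mul, RCLike.ofReal_pow,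
    ← RCLike.mul_conj, mul_comm, RCLike.star_def.symm, star_dotProduct, star_star]

theorem PosSemidef.norm_dotProduct_mulVec_sq_le {V : Matrix n n 𝕜} (hV : V.PosSemidef)
    (x y : n → 𝕜) :
    ‖star x ⬝ᵥ (V *ᵥ y)‖ ^ 2 ≤
      RCLike.re (star x ⬝ᵥ (V *ᵥ x)) * RCLike.re (star y ⬝ᵥ (V *ᵥ y)) := by
  let := V.toSeminormedAddCommGroup hV
  let := V.toInnerProductSpace hV
  have := inner_mul_inner_self_le (𝕜 := 𝕜) x y
  rw [norm_inner_symm y x, ← sq] at this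
  convert this using 3 <;> apply dotProduct_comm

theorem PosSemidef.sum_norm_mulVec_sq_le {V : Matrix n n 𝕜} (hV : V.PosSemidef) (u : n → 𝕜) :
    ∑ i, ‖(V *ᵥ u) i‖ ^ 2 ≤ RCLike.re V.trace * RCLike.re (star u ⬝ᵥ (V *ᵥ u)) := by
  classical
  rw [trace, map_sum, Finset.sum_mul]
  refine Finset.sum_le_sum fun i _ => ?_
  simpa [single_dotProduct] using hV.norm_dotProduct_mulVec_sq_le (Pi.single i 1) u

theorem PosSemidef.exists_vecMulVec_star_quadForm_eq_re_trace_le {V : Matrix n n 𝕜}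
    (hV : V.PosSemidef) (u : n → 𝕜) :
    ∃ w : n → 𝕜, star u ⬝ᵥ (vecMulVec w (star w) *ᵥ u) = star u ⬝ᵥ (V *ᵥ u) ∧
      RCLike.re (vecMulVec w (star w)).trace ≤ RCLike.re V.trace := by
  obtain ⟨q, hq0, hq⟩ := RCLike.nonneg_iff_exists_ofReal.mp (hV.dotProduct_mulVec_nonneg u)
  refine ⟨((√q : ℝ) : 𝕜)⁻¹ • V *ᵥ u, ?_, ?_⟩
  · rw [dotProduct_vecMulVec_star_mulVec, dotProduct_smul, ← hq]
    norm_cast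
    rw [norm_smul, RCLike.norm_ofReal, RCLike.norm_ofReal, abs_inv,
      abs_of_nonneg (Real.sqrt_nonneg q), abs_of_nonneg hq0, mul_pow, inv_pow, Real.sq_sqrt hq0]
    field_simp
  · rw [re_trace_vecMulVec_star]
    simp only [Pi.smul_apply, smul_eq_mul, norm_mul, norm_inv, RCLike.norm_ofReal,
      abs_of_nonneg (Real.sqrt_nonneg q), mul_pow, inv_pow, Real.sq_sqrt hq0, ← Finset.mul_sum]
    rw [inv_mul_eq_div]
    refine div_le_of_le_mul₀ hq0 (RCLike.nonneg_iff.mp hV.trace_nonneg).1 ?_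
    simpa [← hq] using hV.sum_norm_mulVec_sq_le u

end Matrix

theorem sdp_relaxation_rank_one_solution_general
    (n : ℕ) (h : Fin n → ℂ)
    (V : Matrix (Fin n) (Fin n) ℂ) (hV : V.PosSemidef) :
    ∃ w : Fin n → ℂ,
      ((vecMulVec (star h) h) * (vecMulVec w (star w))).trace =
        ((vecMulVec (star h) h) * V).trace ∧
      (vecMulVec w (star w)).trace.re ≤ V.trace.re := by
  obtain ⟨w, hquad, htrace⟩ := hV.exists_vecMulVec_star_quadForm_eq_re_trace_le (star h)
  refine ⟨w, ?_, htrace⟩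
  simpa only [trace_vecMulVec_mul, star_star, dotProduct_comm h] using hquad

/-- Rank-one solution property: if `R = hᴴh` has rank one and `V ⪰ 0` meets the SINR
constraint with equality, there is a rank-one `V' = wwᴴ` with the same useful received
power `Tr[RV'] = Tr[RV]` and no larger trace. -/
theorem sdp_relaxation_rank_one_solution
    (n : ℕ) (h : Fin n → ℂ) (hh : h ≠ 0)
    (Γ σ2 I0 : ℝ) (hΓ : 0 < Γ) (hσ : 0 < σ2) (hI : 0 < I0)
    (V : Matrix (Fin n) (Fin n) ℂ) (hV : V.PosSemidef)
    (hcon : Γ * (σ2 + I0) = ((vecMulVec (star h) h) * V).trace.re) :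
    ∃ w : Fin n → ℂ,
      ((vecMulVec (star h) h) * (vecMulVec w (star w))).trace =
        ((vecMulVec (star h) h) * V).trace ∧
      (vecMulVec w (star w)).trace.re ≤ V.trace.re :=
  sdp_relaxation_rank_one_solution_general n h V hV
end
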